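/- Let (θ^t)_{t≥0} be the Population EM iterates for Model 1. If the initial point satisfies ⟨θ^0, θ*⟩ = 0, then θ^t → 0 as t → ∞. -/

import Mathlib

/-!
Since `2 w_d(y, θ) - 1 = tanh ⟪y, θ⟫`, one EM step is `θ ↦ 𝔼[tanh ⟪Y, θ⟫ • Y]` for `Y` drawn from
the mixture. When `θ ⊥ θ*`, the shifts `±θ*` of the two components do not change `⟪Y, θ⟫` and
cancel in `Y`, so the step is `𝔼[tanh ⟪Z, θ⟫ • Z]` for a standard Gaussian `Z`. Reflecting `Z`
across the line `ℝ θ` shows that this vector is parallel to `θ`, of length `g ‖θ‖` where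
`g a = 𝔼[tanh (a s) s]` for `s ∼ N(0, 1)`. So the iterates stay orthogonal to `θ*` and their norms
are the orbit of `‖θ⁰‖` under `g`. Since `|tanh x| < |x|` for `x ≠ 0` and `𝔼[s²] = 1`, we get
`0 ≤ g a < a` for `a > 0`, and the orbits of such a continuous map decrease to its fixed point `0`.
-/

open MeasureTheory Real Filter InnerProductGeometry RealInnerProductSpace

/-- Standard Gaussian density on `ℝ^d` (identity covariance, mean zero). -/
noncomputable def gpdf (d : ℕ) (x : EuclideanSpace ℝ (Fin d)) : ℝ :=
  (2 * π) ^ (-(d : ℝ) / 2) * Real.exp (-‖x‖ ^ 2 / 2)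

/-- `w_d(y, θ) = φ_d(y − θ)/(φ_d(y − θ) + φ_d(y + θ))`. -/
noncomputable def w1 (d : ℕ) (y θ : EuclideanSpace ℝ (Fin d)) : ℝ :=
  gpdf d (y - θ) / (gpdf d (y - θ) + gpdf d (y + θ))

/-- The density of the mixture `0.5 N(−θ*, I_d) + 0.5 N(θ*, I_d)`. -/
noncomputable def mix1 (d : ℕ) (θs y : EuclideanSpace ℝ (Fin d)) : ℝ :=
  (gpdf d (y - θs) + gpdf d (y + θs)) / 2

/-- Population EM iterates for Model 1:
`θ^{t+1} = ∫ (2 w_d(y, θ^t) − 1) · y · f(y) dy`. -/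
noncomputable def em1 (d : ℕ) (θs θ0 : EuclideanSpace ℝ (Fin d)) :
    ℕ → EuclideanSpace ℝ (Fin d)
  | 0 => θ0
  | t + 1 => ∫ y, ((2 * w1 d y (em1 d θs θ0 t) - 1) * mix1 d θs y) • y

open ProbabilityTheory

namespace Real

@[fun_prop]
lemma continuous_tanh : Continuous tanh := by
  rw [show tanh = fun x => sinh x / cosh x from funext tanh_eq_sinh_div_cosh]
  exact continuous_sinh.div continuous_cosh fun x => (cosh_pos x).ne'

lemma tanh_lt_self {x : ℝ} (hx : 0 < x) : tanh x < x := by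
  have hmono : StrictMonoOn (fun y => y * cosh y - sinh y) (Set.Ici 0) := by
    refine strictMonoOn_of_deriv_pos (convex_Ici 0) (by fun_prop) fun y hy => ?_
    rw [interior_Ici] at hy
    have hd : HasDerivAt (fun y => y * cosh y - sinh y) (y * sinh y) y :=
      (((hasDerivAt_id' y).mul (hasDerivAt_cosh y)).sub (hasDerivAt_sinh y)).congr_deriv
        (by ring)
    rw [hd.deriv]
    exact mul_pos hy (sinh_pos_iff.mpr hy)
  have h := hmono Set.self_mem_Ici hx.le hx
  simp only [zero_mul, sinh_zero, sub_zero] at h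
  rw [tanh_eq_sinh_div_cosh, div_lt_iff₀ (cosh_pos x)]
  linarith

lemma tanh_mul_self_nonneg (x : ℝ) : 0 ≤ tanh x * x := by
  rw [tanh_eq_sinh_div_cosh, div_mul_eq_mul_div]
  refine div_nonneg ?_ (cosh_pos x).le
  rcases le_total 0 x with hx | hx
  · exact mul_nonneg (sinh_nonneg_iff.mpr hx) hx
  · exact mul_nonneg_of_nonpos_of_nonpos (sinh_nonpos_iff.mpr hx) hx

lemma tanh_mul_self_lt_sq {x : ℝ} (hx : x ≠ 0) : tanh x * x < x ^ 2 := by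
  rcases hx.lt_or_gt with hx | hx
  · have := tanh_lt_self (neg_pos.mpr hx)
    rw [tanh_neg] at this
    nlinarith
  · nlinarith [tanh_lt_self hx]

lemma tanh_mul_self_le_sq (x : ℝ) : tanh x * x ≤ x ^ 2 := by
  rcases eq_or_ne x 0 with rfl | hx
  · simp
  · exact (tanh_mul_self_lt_sq hx).le

end Real

lemma tendsto_iterate_nhds_zero_of_lt_self {f : ℝ → ℝ} (hf : Continuous f)
    (hf_nonneg : ∀ x, 0 ≤ x → 0 ≤ f x) (hf_lt : ∀ x, 0 < x → f x < x) {a : ℝ} (ha : 0 ≤ a) :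
    Tendsto (fun n => f^[n] a) atTop (nhds 0) := by
  have hf_le (x : ℝ) (hx : 0 ≤ x) : f x ≤ x := by
    rcases hx.eq_or_lt with rfl | hx
    -- `f 0 ≤ 0` by letting `x → 0⁺` in `f x < x`
    · exact le_of_tendsto_of_tendsto (b := nhdsWithin 0 (Set.Ioi 0))
        ((hf.tendsto 0).mono_left nhdsWithin_le_nhds)
        (tendsto_nhdsWithin_of_tendsto_nhds tendsto_id)
        (eventually_nhdsWithin_of_forall fun x hx => (hf_lt x hx).le)
    · exact (hf_lt x hx).le
  have hnonneg (n : ℕ) : 0 ≤ f^[n] a := by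
    induction n with
    | zero => exact ha
    | succ n ih => rw [Function.iterate_succ_apply']; exact hf_nonneg _ ih
  have hanti : Antitone fun n => f^[n] a := antitone_nat_of_succ_le fun n => by
    rw [Function.iterate_succ_apply']; exact hf_le _ (hnonneg n)
  have hlim := tendsto_atTop_ciInf hanti ⟨0, Set.forall_mem_range.mpr hnonneg⟩
  have hfix : f (⨅ n, f^[n] a) = ⨅ n, f^[n] a :=
    isFixedPt_of_tendsto_iterate hlim hf.continuousAt
  rcases (le_ciInf hnonneg).eq_or_lt with h | h
  · rwa [← h] at hlim
  · exact absurd hfix (hf_lt _ h).ne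

lemma integral_sq_gaussianReal_zero_one : ∫ s, s ^ 2 ∂gaussianReal 0 1 = 1 := by
  rw [← variance_of_integral_eq_zero aemeasurable_id' integral_id_gaussianReal,
    variance_fun_id_gaussianReal, NNReal.coe_one]

lemma gaussianReal_zero_one_compl_singleton : gaussianReal 0 1 {0}ᶜ = 1 := by
  have := nullSingletonClass_gaussianReal (μ := 0) one_ne_zero
  rw [prob_compl_eq_one_sub (measurableSet_singleton 0), measure_singleton, tsub_zero]

-- The norm of one EM step from `θ ⊥ θ*`, as a function of `‖θ‖`.
noncomputable def emNormMap (a : ℝ) : ℝ := ∫ s, tanh (a * s) * s ∂gaussianReal 0 1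

lemma abs_tanh_mul_mul_self_le (a s : ℝ) : |tanh (a * s) * s| ≤ |s| := by
  rw [abs_mul]
  exact mul_le_of_le_one_left (abs_nonneg s) (abs_tanh_lt_one _).le

lemma integrable_tanh_mul_mul_self (a : ℝ) :
    Integrable (fun s => tanh (a * s) * s) (gaussianReal 0 1) :=
  IsGaussian.integrable_id.norm.mono' (by fun_prop)
    (ae_of_all _ fun s => abs_tanh_mul_mul_self_le a s)

lemma emNormMap_nonneg {a : ℝ} (ha : 0 ≤ a) : 0 ≤ emNormMap a := by
  rcases ha.eq_or_lt with rfl | ha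
  · simp [emNormMap]
  refine integral_nonneg fun s => (mul_nonneg_iff_of_pos_left ha).mp ?_
  simpa [← mul_assoc, mul_comm a] using tanh_mul_self_nonneg (a * s)

lemma emNormMap_lt_self {a : ℝ} (ha : 0 < a) : emNormMap a < a := by
  have hsq : Integrable (fun s => a * s ^ 2) (gaussianReal 0 1) :=
    ((memLp_id_gaussianReal 2).integrable_sq).const_mul a
  have hpos : 0 < ∫ s, (a * s ^ 2 - tanh (a * s) * s) ∂gaussianReal 0 1 := by
    have hscale (s : ℝ) :
        a * (a * s ^ 2 - tanh (a * s) * s) = (a * s) ^ 2 - tanh (a * s) * (a * s) := by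
      ring
    refine (integral_pos_iff_support_of_nonneg
      (f := fun s => a * s ^ 2 - tanh (a * s) * s) (fun s => ?_)
      (hsq.sub (integrable_tanh_mul_mul_self a))).mpr ?_
    · refine (mul_nonneg_iff_of_pos_left ha).mp ?_
      rw [hscale]
      exact sub_nonneg.mpr (tanh_mul_self_le_sq _)
    · refine lt_of_lt_of_le (by rw [gaussianReal_zero_one_compl_singleton]; exact zero_lt_one)
        (measure_mono ?_)
      intro s (hs : s ≠ 0)
      refine (pos_of_mul_pos_right ?_ ha.le).ne'
      rw [hscale]
      exact sub_pos.mpr (tanh_mul_self_lt_sq (mul_ne_zero ha.ne' hs))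
  rw [integral_sub hsq (integrable_tanh_mul_mul_self a), integral_const_mul,
    integral_sq_gaussianReal_zero_one, mul_one] at hpos
  exact sub_pos.mp hpos

lemma continuous_emNormMap : Continuous emNormMap :=
  continuous_of_dominated (fun a => by fun_prop)
    (fun a => ae_of_all _ fun s => abs_tanh_mul_mul_self_le a s) IsGaussian.integrable_id.norm
    (ae_of_all _ fun s => by fun_prop)

section StdGaussian

variable {E : Type*} [NormedAddCommGroup E] [InnerProductSpace ℝ E] [FiniteDimensional ℝ E]
  [MeasurableSpace E] [BorelSpace E]

lemma stdGaussian_map_innerSL (u : E) :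
    (stdGaussian E).map (innerSL ℝ u) = gaussianReal 0 (‖u‖₊ ^ 2) := by
  rw [IsGaussian.map_eq_gaussianReal, integral_strongDual_stdGaussian, variance_dual_stdGaussian,
    innerSL_apply_norm]
  congr
  ext; simp

lemma integral_stdGaussian_comp_linearIsometryEquiv {F : Type*} [NormedAddCommGroup F]
    [NormedSpace ℝ F] (R : E ≃ₗᵢ[ℝ] E) (f : E → F) :
    ∫ y, f (R y) ∂stdGaussian E = ∫ y, f y ∂stdGaussian E :=
  MeasurePreserving.integral_comp ⟨R.continuous.measurable, stdGaussian_map R⟩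
    R.toHomeomorph.measurableEmbedding f

lemma integral_comp_inner_smul_stdGaussian {u : E} (hu : ‖u‖ = 1) {h : ℝ → ℝ}
    (hh : Measurable h) (hi : Integrable (fun y => h ⟪y, u⟫ • y) (stdGaussian E)) :
    ∫ y, h ⟪y, u⟫ • y ∂stdGaussian E = (∫ s, h s * s ∂gaussianReal 0 1) • u := by
  set I := ∫ y, h ⟪y, u⟫ • y ∂stdGaussian E with hI
  set R := (ℝ ∙ u).reflection
  have hRu : R u = u :=
    Submodule.reflection_mem_subspace_eq_self (Submodule.mem_span_singleton_self u)
  have hRI : R I = I := calc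
    R I = ∫ y, R (h ⟪y, u⟫ • y) ∂stdGaussian E :=
      (R.toLinearIsometry.integral_comp_comm _).symm
    _ = ∫ y, h ⟪R y, u⟫ • R y ∂stdGaussian E := by
      congr 1; ext y
      rw [map_smul, ← R.inner_map_map y u, hRu]
    _ = I := integral_stdGaussian_comp_linearIsometryEquiv R (fun y => h ⟪y, u⟫ • y)
  obtain ⟨c, hc⟩ :=
    Submodule.mem_span_singleton.mp ((Submodule.reflection_eq_self_iff I).mp hRI)
  have hcI : ⟪u, I⟫ = c := by
    rw [← hc, real_inner_smul_right, real_inner_self_eq_norm_sq, hu]; ring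
  have hmarg : ⟪u, I⟫ = ∫ s, h s * s ∂gaussianReal 0 1 := by
    have hmap := stdGaussian_map_innerSL u
    rw [show ‖u‖₊ ^ 2 = 1 by ext; simp [hu]] at hmap
    rw [hI, ← integral_inner hi, ← hmap,
      integral_map (innerSL ℝ u).continuous.aemeasurable
        (f := fun s => h s * s) (hh.mul measurable_id).aestronglyMeasurable]
    simp_rw [inner_smul_right, innerSL_apply_apply, real_inner_comm u]
  rw [← hc, ← hcI, hmarg]

lemma integrable_tanh_inner_smul_add (θ c : E) :
    Integrable (fun y => tanh ⟪y + c, θ⟫ • (y + c)) (stdGaussian E) := by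
  refine (IsGaussian.integrable_id.norm.add (integrable_const ‖c‖)).mono' (by fun_prop)
    (ae_of_all _ fun y => ?_)
  rw [norm_smul, Real.norm_eq_abs]
  exact (mul_le_of_le_one_left (norm_nonneg _) (abs_tanh_lt_one _).le).trans
    (norm_add_le _ _)

lemma integral_tanh_inner_smul_stdGaussian (θ : E) :
    ∫ y, tanh ⟪y, θ⟫ • y ∂stdGaussian E = (emNormMap ‖θ‖ / ‖θ‖) • θ := by
  rcases eq_or_ne θ 0 with rfl | hθ
  · simp
  set u := ‖θ‖⁻¹ • θ
  have hu : ‖u‖ = 1 := norm_smul_inv_norm hθ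
  have hθu : θ = ‖θ‖ • u := by simp [u, smul_smul, norm_ne_zero_iff.mpr hθ]
  have hi : Integrable (fun y => tanh (‖θ‖ * ⟪y, u⟫) • y) (stdGaussian E) := by
    simpa [← real_inner_smul_right, ← hθu] using integrable_tanh_inner_smul_add θ 0
  conv_lhs => rw [hθu]
  simp_rw [real_inner_smul_right]
  rw [integral_comp_inner_smul_stdGaussian (h := fun s => tanh (‖θ‖ * s)) hu (by fun_prop)
    hi, emNormMap, smul_smul, div_eq_mul_inv]

end StdGaussian

lemma gpdf_pos (d : ℕ) (x : EuclideanSpace ℝ (Fin d)) : 0 < gpdf d x := by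
  unfold gpdf; positivity

lemma continuous_gpdf (d : ℕ) : Continuous (gpdf d) := by
  unfold gpdf; fun_prop

lemma integral_gpdf (d : ℕ) : ∫ x, gpdf d x = 1 := by
  have h := GaussianFourier.integral_rexp_neg_mul_sq_norm (V := EuclideanSpace ℝ (Fin d))
    (b := 1 / 2) (by norm_num)
  simp_rw [gpdf, integral_const_mul, neg_div, div_eq_inv_mul, ← neg_mul, inv_eq_one_div, h,
    finrank_euclideanSpace_fin, div_div_eq_mul_div, div_one, mul_comm π,
    ← Real.rpow_add (by positivity : (0 : ℝ) < 2 * π)]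
  ring_nf
  exact Real.rpow_zero _

lemma integral_withDensity_gpdf {F : Type*} [NormedAddCommGroup F] [NormedSpace ℝ F] (d : ℕ)
    (f : EuclideanSpace ℝ (Fin d) → F) :
    ∫ x, f x ∂volume.withDensity (fun x => ENNReal.ofReal (gpdf d x)) = ∫ x, gpdf d x • f x := by
  have := integral_withDensity_eq_integral_smul (μ := volume)
    (f := fun x => (gpdf d x).toNNReal) (continuous_gpdf d).measurable.real_toNNReal f
  simp_rw [NNReal.smul_def, Real.coe_toNNReal _ (gpdf_pos d _).le] at this
  exact this

lemma integral_gpdf_smul_cexp_inner (d : ℕ) (t : EuclideanSpace ℝ (Fin d)) :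
    ∫ x, gpdf d x • Complex.exp (⟪x, t⟫ * Complex.I) = Complex.exp (-‖t‖ ^ 2 / 2) := by
  have hC : (((2 * π) ^ (-(d : ℝ) / 2) : ℝ) : ℂ) * (↑π / (1 / 2)) ^ ((d : ℂ) / 2) = 1 := by
    rw [show (↑π / (1 / 2) : ℂ) = ((2 * π : ℝ) : ℂ) by push_cast; ring,
      show ((d : ℂ) / 2) = (((d : ℝ) / 2 : ℝ) : ℂ) by push_cast; ring,
      ← Complex.ofReal_cpow (by positivity), ← Complex.ofReal_mul, ← Real.rpow_add (by positivity),
      neg_div, neg_add_cancel, Real.rpow_zero, Complex.ofReal_one]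
  have hint (x : EuclideanSpace ℝ (Fin d)) : gpdf d x • Complex.exp (⟪x, t⟫ * Complex.I)
      = (((2 * π) ^ (-(d : ℝ) / 2) : ℝ) : ℂ)
        * Complex.exp (-(1 / 2) * ↑‖x‖ ^ 2 + Complex.I * ↑⟪t, x⟫) := by
    rw [gpdf, Complex.real_smul, Complex.ofReal_mul, mul_assoc, Complex.ofReal_exp,
      ← Complex.exp_add, real_inner_comm]
    push_cast; ring_nf
  rw [integral_congr_ae (ae_of_all _ hint), integral_const_mul,
    GaussianFourier.integral_cexp_neg_mul_sq_norm_add (by norm_num), finrank_euclideanSpace_fin,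
    ← mul_assoc, hC, Complex.I_sq]
  ring_nf

lemma stdGaussian_eq_withDensity_gpdf (d : ℕ) :
    stdGaussian (EuclideanSpace ℝ (Fin d))
      = volume.withDensity (fun x => ENNReal.ofReal (gpdf d x)) := by
  have : IsFiniteMeasure (volume.withDensity (fun x => ENNReal.ofReal (gpdf d x))) :=
    isFiniteMeasure_withDensity_ofReal
      (Integrable.of_integral_ne_zero (by simp [integral_gpdf])).hasFiniteIntegral
  refine Measure.ext_of_charFun (funext fun t => ?_)
  rw [charFun_stdGaussian, charFun_apply, integral_withDensity_gpdf, integral_gpdf_smul_cexp_inner]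

section Density

variable {d : ℕ} {F : Type*} [NormedAddCommGroup F] [NormedSpace ℝ F]

lemma integral_gpdf_smul (f : EuclideanSpace ℝ (Fin d) → F) :
    ∫ y, gpdf d y • f y = ∫ y, f y ∂stdGaussian (EuclideanSpace ℝ (Fin d)) := by
  rw [stdGaussian_eq_withDensity_gpdf, integral_withDensity_gpdf]

lemma integrable_gpdf_smul_iff {f : EuclideanSpace ℝ (Fin d) → F} :
    Integrable (fun y => gpdf d y • f y) ↔
      Integrable f (stdGaussian (EuclideanSpace ℝ (Fin d))) := by
  rw [stdGaussian_eq_withDensity_gpdf, integrable_withDensity_iff_integrable_smul'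
    (continuous_gpdf d).measurable.ennreal_ofReal (ae_of_all _ fun _ => ENNReal.ofReal_lt_top)]
  simp_rw [fun x => ENNReal.toReal_ofReal (gpdf_pos d x).le]

lemma integral_gpdf_sub_smul (c : EuclideanSpace ℝ (Fin d)) (f : EuclideanSpace ℝ (Fin d) → F) :
    ∫ y, gpdf d (y - c) • f y = ∫ z, f (z + c) ∂stdGaussian (EuclideanSpace ℝ (Fin d)) := by
  rw [← integral_gpdf_smul, ← integral_sub_right_eq_self (fun z => gpdf d z • f (z + c)) c]
  simp_rw [sub_add_cancel]

lemma integrable_gpdf_sub_smul {c : EuclideanSpace ℝ (Fin d)} {f : EuclideanSpace ℝ (Fin d) → F}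
    (hf : Integrable (fun z => f (z + c)) (stdGaussian (EuclideanSpace ℝ (Fin d)))) :
    Integrable (fun y => gpdf d (y - c) • f y) := by
  simpa using (integrable_gpdf_smul_iff.mpr hf).comp_sub_right c

lemma integral_mix1_smul {θs : EuclideanSpace ℝ (Fin d)} {f : EuclideanSpace ℝ (Fin d) → F}
    (hf₁ : Integrable (fun z => f (z + θs)) (stdGaussian (EuclideanSpace ℝ (Fin d))))
    (hf₂ : Integrable (fun z => f (z - θs)) (stdGaussian (EuclideanSpace ℝ (Fin d)))) :
    ∫ y, mix1 d θs y • f y = (2 : ℝ)⁻¹ • (∫ z, f (z + θs) ∂stdGaussian (EuclideanSpace ℝ (Fin d))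
      + ∫ z, f (z - θs) ∂stdGaussian (EuclideanSpace ℝ (Fin d))) := by
  have hf₂' : Integrable (fun z => f (z + -θs)) (stdGaussian (EuclideanSpace ℝ (Fin d))) := by
    simpa [← sub_eq_add_neg] using hf₂
  have hsplit (y : EuclideanSpace ℝ (Fin d)) : mix1 d θs y • f y
      = (2 : ℝ)⁻¹ • (gpdf d (y - θs) • f y + gpdf d (y - -θs) • f y) := by
    rw [mix1, sub_neg_eq_add, ← add_smul, smul_smul, div_eq_inv_mul]
  simp_rw [hsplit]
  rw [integral_smul, integral_add (integrable_gpdf_sub_smul hf₁) (integrable_gpdf_sub_smul hf₂'),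
    integral_gpdf_sub_smul, integral_gpdf_sub_smul]
  simp_rw [← sub_eq_add_neg]

end Density

section PopulationEM

variable {d : ℕ}

lemma two_mul_w1_sub_one (y θ : EuclideanSpace ℝ (Fin d)) :
    2 * w1 d y θ - 1 = tanh ⟪y, θ⟫ := by
  set K := (2 * π) ^ (-(d : ℝ) / 2) * Real.exp (-(‖y‖ ^ 2 + ‖θ‖ ^ 2) / 2)
  have hsub : gpdf d (y - θ) = K * Real.exp ⟪y, θ⟫ := by
    rw [gpdf, norm_sub_sq_real, mul_assoc, ← Real.exp_add]; ring_nf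
  have hadd : gpdf d (y + θ) = K * Real.exp (-⟪y, θ⟫) := by
    rw [gpdf, norm_add_sq_real, mul_assoc, ← Real.exp_add]; ring_nf
  have hK : 0 < K := by positivity
  rw [w1, hsub, hadd, tanh_eq]
  field_simp
  ring

lemma em_step_eq_of_inner_eq_zero {θs θ : EuclideanSpace ℝ (Fin d)} (h : ⟪θ, θs⟫ = 0) :
    ∫ y, ((2 * w1 d y θ - 1) * mix1 d θs y) • y = (emNormMap ‖θ‖ / ‖θ‖) • θ := by
  have hθs : ⟪θs, θ⟫ = 0 := by rw [real_inner_comm, h]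
  have hsym (z : EuclideanSpace ℝ (Fin d)) :
      tanh ⟪z + θs, θ⟫ • (z + θs) + tanh ⟪z - θs, θ⟫ • (z - θs)
        = (2 : ℝ) • tanh ⟪z, θ⟫ • z := by
    rw [inner_add_left, inner_sub_left, hθs, add_zero, sub_zero, ← smul_add, add_add_sub_cancel,
      ← two_smul ℝ z, smul_comm]
  have hf₁ := integrable_tanh_inner_smul_add θ θs
  have hf₂ := integrable_tanh_inner_smul_add θ (-θs)
  simp_rw [← sub_eq_add_neg] at hf₂
  simp_rw [two_mul_w1_sub_one, mul_comm _ (mix1 d θs _), mul_smul]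
  rw [integral_mix1_smul hf₁ hf₂, ← integral_add hf₁ hf₂]
  simp_rw [hsym]
  rw [integral_smul, smul_smul, inv_mul_cancel₀ two_ne_zero, one_smul,
    integral_tanh_inner_smul_stdGaussian]

lemma norm_emNormMap_div_norm_smul (x : EuclideanSpace ℝ (Fin d)) :
    ‖(emNormMap ‖x‖ / ‖x‖) • x‖ = emNormMap ‖x‖ := by
  rcases eq_or_ne x 0 with rfl | hx
  · simp [emNormMap]
  rw [norm_smul, Real.norm_eq_abs, abs_div, abs_norm,
    abs_of_nonneg (emNormMap_nonneg (norm_nonneg x)), div_mul_cancel₀ _ (norm_ne_zero_iff.mpr hx)]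

variable {θs θ0 : EuclideanSpace ℝ (Fin d)}

lemma em1_succ_of_inner_eq_zero {t : ℕ} (h : ⟪em1 d θs θ0 t, θs⟫ = 0) :
    em1 d θs θ0 (t + 1) = (emNormMap ‖em1 d θs θ0 t‖ / ‖em1 d θs θ0 t‖) • em1 d θs θ0 t :=
  em_step_eq_of_inner_eq_zero h

lemma inner_em1_eq_zero (h0 : ⟪θ0, θs⟫ = 0) (t : ℕ) : ⟪em1 d θs θ0 t, θs⟫ = 0 := by
  induction t with
  | zero => exact h0
  | succ t ih => rw [em1_succ_of_inner_eq_zero ih, real_inner_smul_left, ih, mul_zero]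

lemma norm_em1 (h0 : ⟪θ0, θs⟫ = 0) (t : ℕ) : ‖em1 d θs θ0 t‖ = emNormMap^[t] ‖θ0‖ := by
  induction t with
  | zero => rfl
  | succ t ih =>
    rw [em1_succ_of_inner_eq_zero (inner_em1_eq_zero h0 t), norm_emNormMap_div_norm_smul, ih,
      Function.iterate_succ_apply']

end PopulationEM

theorem stmt1_general (d : ℕ) (θs θ0 : EuclideanSpace ℝ (Fin d))
    (h0 : ⟪θ0, θs⟫ = 0) :
    Tendsto (em1 d θs θ0) atTop (nhds 0) := by
  rw [tendsto_zero_iff_norm_tendsto_zero]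
  simp_rw [norm_em1 h0]
  exact tendsto_iterate_nhds_zero_of_lt_self continuous_emNormMap (fun _ => emNormMap_nonneg)
    (fun _ => emNormMap_lt_self) (norm_nonneg θ0)

/-- Theorem 2 (Model 1): if `⟨θ^0, θ*⟩ = 0` then `θ^t → 0`. -/
theorem stmt1 (d : ℕ) (hd : 1 ≤ d) (θs θ0 : EuclideanSpace ℝ (Fin d))
    (h0 : ⟪θ0, θs⟫ = 0) :
    Tendsto (em1 d θs θ0) atTop (nhds 0) :=
  stmt1_general d θs θ0 h0
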